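/- For every ν ∈ (0,1] and every τ ∈ ℝ one has |1 − V_0(τ + i/2)/V_0(iΥ_ν)|² = K^ν(τ), i.e. the squared modulus of 1 − V_0(τ+i/2)/V_0(iΥ_ν) equals (1 + 4τ² + 4w_ν² − 4w_ν·(sech(πτ) + 2τ·tanh(πτ)))/(1 + 4τ²). -/

import Mathlib

/-- Υ_ν := √(1 − ν²). -/
noncomputable def Ups (ν : ℝ) : ℝ := Real.sqrt (1 - ν ^ 2)

/-- w_ν := Υ_ν · cot(π Υ_ν / 2) for ν ∈ [0,1), with w_1 := 2/π (continuous extension). -/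
noncomputable def w (ν : ℝ) : ℝ :=
  if ν = 1 then 2 / Real.pi else Ups ν * Real.cot (Real.pi * Ups ν / 2)

/-- V_l(z) := Γ((l+1+iz)/2)Γ((l+1−iz)/2) / (2 Γ((l+2+iz)/2)Γ((l+2−iz)/2)). -/
noncomputable def Vl (l : ℕ) (z : ℂ) : ℂ :=
  Complex.Gamma ((l + 1 + Complex.I * z) / 2) * Complex.Gamma ((l + 1 - Complex.I * z) / 2) /
    (2 * Complex.Gamma ((l + 2 + Complex.I * z) / 2) * Complex.Gamma ((l + 2 - Complex.I * z) / 2))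

/-- K^ν(τ) := (1 + 4τ² + 4w_ν² − 4w_ν(sech(πτ) + 2τ tanh(πτ)))/(1 + 4τ²). -/
noncomputable def Kf (ν τ : ℝ) : ℝ :=
  (1 + 4 * τ ^ 2 + 4 * (w ν) ^ 2
      - 4 * w ν * (1 / Real.cosh (Real.pi * τ) + 2 * τ * Real.tanh (Real.pi * τ)))
    / (1 + 4 * τ ^ 2)

/-!
With `a = i z / 2`, the reflection formulas `Γ(1/2 + a) Γ(1/2 - a) = π / cos (π a)` and
`Γ(1 + a) Γ(1 - a) = π a / sin (π a)` give `V₀(z) = tan (π a) / (2 a)`. At `z = i Υ_ν` this is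
`tan (π Υ_ν / 2) / Υ_ν = 1 / w_ν` (and `V₀(0) = π / 2 = 1 / w_1`). At `z = τ + i/2` one has
`π a = -π/4 + i π τ / 2`, and `tan (x + i y) = (sin 2x + i sinh 2y) / (cos 2x + cosh 2y)` yields
`V₀(τ + i/2) = (-sech (π τ) + i tanh (π τ)) / (-1/2 + i τ)`. The squared modulus of
`1 - w_ν V₀(τ + i/2)` is then a rational computation using `sech² + tanh² = 1`.
-/

open Complex ComplexConjugate
open scoped Real

namespace Complex

theorem Gamma_one_half_add_mul_Gamma_one_half_sub (a : ℂ) :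
    Gamma (1 / 2 + a) * Gamma (1 / 2 - a) = π / cos (π * a) := by
  rw [show (1 : ℂ) / 2 - a = 1 - (1 / 2 + a) by ring, Gamma_mul_Gamma_one_sub,
    show (π : ℂ) * (1 / 2 + a) = π * a + π / 2 by ring, sin_add_pi_div_two]

theorem Gamma_one_add_mul_Gamma_one_sub {a : ℂ} (ha : a ≠ 0) :
    Gamma (1 + a) * Gamma (1 - a) = π * a / sin (π * a) := by
  rw [add_comm, Gamma_add_one a ha, mul_assoc, Gamma_mul_Gamma_one_sub]
  ring

-- Multiply numerator and denominator by `cos (x - y I) = conj (cos (x + y I))`; when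
-- `cos (x + y I) = 0` both sides are junk `0`.
theorem tan_add_mul_I_eq (x y : ℝ) :
    tan (x + y * I) = (sin (2 * x) + sinh (2 * y) * I) / (cos (2 * x) + cosh (2 * y)) := by
  set z : ℂ := x + y * I
  set z' : ℂ := x - y * I
  have hz' : z' = conj z := by simp [z, z', sub_eq_add_neg]
  have hnum : sin (2 * x) + sinh (2 * y) * I = 2 * sin z * cos z' := by
    rw [← sin_mul_I, show (2 * x : ℂ) = z + z' by ring, show (2 * y : ℂ) * I = z - z' by ring,
      sin_add z z', sin_sub z z']
    ring
  have hden : cos (2 * x) + cosh (2 * y) = 2 * cos z * cos z' := by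
    rw [← cos_mul_I, show (2 * x : ℂ) = z + z' by ring, show (2 * y : ℂ) * I = z - z' by ring,
      cos_add z z', cos_sub z z']
    ring
  rw [hnum, hden, tan_eq_sin_div_cos]
  by_cases hc : cos z = 0
  · simp [hc]
  · have hc' : cos z' ≠ 0 := by rwa [hz', cos_conj, map_ne_zero]
    field_simp

end Complex

theorem Vl_zero_zero : Vl 0 0 = π / 2 := by
  simpa [Vl] using Gamma_one_half_add_mul_Gamma_one_half_sub 0

theorem Vl_zero_eq_tan {z : ℂ} (hz : z ≠ 0) : Vl 0 z = tan (π * (I * z / 2)) / (I * z) := by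
  set a := I * z / 2 with ha
  have ha0 : a ≠ 0 := by simp [ha, hz]
  have hpi : (π : ℂ) ≠ 0 := ofReal_ne_zero.mpr Real.pi_ne_zero
  have hGamma : Vl 0 z = Gamma (1 / 2 + a) * Gamma (1 / 2 - a)
      / (2 * (Gamma (1 + a) * Gamma (1 - a))) := by
    simp only [Vl, Nat.cast_zero, zero_add, ha]
    ring_nf
  rw [hGamma, Gamma_one_half_add_mul_Gamma_one_half_sub, Gamma_one_add_mul_Gamma_one_sub ha0,
    tan_eq_sin_div_cos, show I * z = 2 * a by ring]
  field_simp

theorem Vl_zero_I_mul_Ups {ν : ℝ} (hν : ν ∈ Set.Ioc (-1 : ℝ) 1) :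
    Vl 0 (I * (Ups ν : ℂ)) = ((w ν : ℝ) : ℂ)⁻¹ := by
  rcases hν.2.eq_or_lt with rfl | hlt
  · simp [Ups, w, Vl_zero_zero]
  · have hU : 0 < Ups ν := Real.sqrt_pos.mpr (by nlinarith [hν.1])
    have hIIU : I * (I * (Ups ν : ℂ)) = ((-Ups ν : ℝ) : ℂ) := by
      push_cast; rw [← mul_assoc, I_mul_I]; ring
    rw [Vl_zero_eq_tan (by simpa using hU.ne'), hIIU,
      show (π : ℂ) * ((-Ups ν : ℝ) / 2) = ((-(π * Ups ν / 2) : ℝ) : ℂ) by push_cast; ring,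
      ← ofReal_tan, ← ofReal_div, w, if_neg hlt.ne, ← ofReal_inv, Real.tan_neg, neg_div_neg_eq,
      mul_inv, ← Real.tan_inv_eq_cot, inv_inv, div_eq_inv_mul]

theorem Vl_zero_half_line (τ : ℝ) :
    Vl 0 (τ + I / 2) = (-1 + Real.sinh (π * τ) * I) / Real.cosh (π * τ) / (-1 / 2 + τ * I) := by
  have hz : (τ : ℂ) + I / 2 ≠ 0 := fun h => by simpa using congrArg im h
  have hIz : I * ((τ : ℂ) + I / 2) = -1 / 2 + τ * I := by
    linear_combination (1 / 2 : ℂ) * I_mul_I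
  rw [Vl_zero_eq_tan hz, hIz,
    show (π : ℂ) * ((-1 / 2 + τ * I) / 2) = ((-(π / 4) : ℝ) : ℂ) + ((π * τ / 2 : ℝ) : ℂ) * I by
      push_cast; ring,
    tan_add_mul_I_eq]
  congr 1
  rw [show (2 : ℂ) * ((-(π / 4) : ℝ) : ℂ) = -(π / 2) by push_cast; ring,
    show (2 : ℂ) * ((π * τ / 2 : ℝ) : ℂ) = ((π * τ : ℝ) : ℂ) by push_cast; ring,
    sin_neg, sin_pi_div_two, cos_neg, cos_pi_div_two, zero_add, ofReal_sinh, ofReal_cosh]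

theorem norm_sq_one_sub_Vl_zero_half_line_mul (τ W : ℝ) :
    ‖1 - Vl 0 (τ + I / 2) * W‖ ^ 2
      = (1 + 4 * τ ^ 2 + 4 * W ^ 2
          - 4 * W * (1 / Real.cosh (π * τ) + 2 * τ * Real.tanh (π * τ))) / (1 + 4 * τ ^ 2) := by
  rw [Vl_zero_half_line]
  set C := Real.cosh (π * τ) with hC
  set S := Real.sinh (π * τ) with hS
  have hC0 : C ≠ 0 := (Real.cosh_pos _).ne'
  have hD0 : (-1 / 2 + τ * I : ℂ) ≠ 0 := fun h => by simpa using congrArg re h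
  have hquot : 1 - (-1 + S * I) / C / (-1 / 2 + τ * I) * W
      = ((W - C / 2 : ℝ) + (C * τ - W * S : ℝ) * I) / ((-C / 2 : ℝ) + (C * τ : ℝ) * I) := by
    rw [show ((-C / 2 : ℝ) : ℂ) + (C * τ : ℝ) * I = C * (-1 / 2 + τ * I) by push_cast; ring,
      div_div, div_mul_eq_mul_div, one_sub_div (mul_ne_zero (ofReal_ne_zero.mpr hC0) hD0)]
    push_cast
    ring
  rw [hquot, norm_div, div_pow, Complex.sq_norm, Complex.sq_norm, normSq_add_mul_I,
    normSq_add_mul_I, Real.tanh_eq_sinh_div_cosh, ← hC, ← hS]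
  field_simp
  linear_combination (-4 * W ^ 2 * (1 + 4 * τ ^ 2)) * Real.cosh_sq (π * τ)

/-- For every ν ∈ (0,1] and τ ∈ ℝ: |1 − V_0(τ+i/2)/V_0(iΥ_ν)|² = K^ν(τ). -/
theorem abs_sq_one_sub_V0_ratio (ν : ℝ) (hν : ν ∈ Set.Ioc (0 : ℝ) 1) (τ : ℝ) :
    ‖(1 - Vl 0 ((τ : ℂ) + Complex.I / 2) / Vl 0 (Complex.I * (Ups ν : ℂ)))‖ ^ 2
      = Kf ν τ := by
  rw [Vl_zero_I_mul_Ups ⟨by linarith [hν.1], hν.2⟩, div_inv_eq_mul,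
    norm_sq_one_sub_Vl_zero_half_line_mul, Kf]
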